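/- arXiv:1111.6431 — 7 statements merged into one kernel-verified Lean document; each statement's English description precedes it below -/
import Mathlib

section
/- The language L_UNIQ of uniquely decodable strings is factorial: if w ∈ L_UNIQ and u is a contiguous substring (factor) of w, then u ∈ L_UNIQ. -/
/-!
The bigram vector of `$w$` determines the first and the last letter of `w`: they are read off
the only bigrams starting, resp. ending, with `$`. Splitting `$sut$` at the first and the last
letter of `u` shows that its bigrams are those of `$u$`, corrected by terms depending only on
`s`, `t` and these two letters. So if `v` has the bigrams of `u`, then `svt` has the bigrams of
`sut`; unique decodability of `sut` gives `svt = sut`, hence `v = u`.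
-/

variable {α : Type*}

/-- The `$`-delimited version of a string over `α`; `none` plays the role of `$`. -/
def delim (w : List α) : List (Option α) :=
  none :: (w.map some ++ [none])

/-- The bigram count vector of `$w$`, as the multiset of adjacent ordered pairs
(multiset equality is the same as equality of all bigram counts). -/
def bigrams (w : List α) : Multiset (Option α × Option α) :=
  ((delim w).zip (delim w).tail : List (Option α × Option α))

/-- A string is uniquely decodable if `$w$` is the only delimited string with its
bigram count vector. -/
def UniqDec (w : List α) : Prop :=
  ∀ v : List α, bigrams v = bigrams w → v = w

theorem List.consecutivePairs_append_cons {β : Type*} (l₁ l₂ : List β) (x : β) :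
    (l₁ ++ x :: l₂).consecutivePairs =
      (l₁ ++ [x]).consecutivePairs ++ (x :: l₂).consecutivePairs := by
  induction l₁ with
  | nil => rfl
  | cons a l₁ ih =>
    cases l₁ with
    | nil => rfl
    | cons b l₁ => exact congrArg ((a, b) :: ·) ih

theorem bigrams_eq_consecutivePairs (w : List α) :
    bigrams w = ((delim w).consecutivePairs : Multiset _) := rfl

/-- Both sides are the bigrams of `$s x`, those of `x t$`, and the two bigrams `$x`, `x$`. -/
theorem bigrams_append_cons_add (s t : List α) (x : α) :
    bigrams (s ++ x :: t) + bigrams [x] = bigrams (s ++ [x]) + bigrams (x :: t) := by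
  have split : ∀ l₁ l₂ : List α, bigrams (l₁ ++ x :: l₂) =
      ↑((none :: l₁.map some) ++ [some x]).consecutivePairs +
        ↑(some x :: (l₂.map some ++ [none])).consecutivePairs := fun l₁ l₂ => by
    rw [bigrams_eq_consecutivePairs, Multiset.coe_add, ← List.consecutivePairs_append_cons]
    simp [delim]
  rw [split s t, split s [], ← List.nil_append (x :: t), split [] t,
    ← List.nil_append [x], split [] []]
  abel

theorem snd_eq_head?_of_mem_bigrams {w : List α} {p : Option α × Option α}
    (hp : p ∈ bigrams w) (h : p.1 = none) : p.2 = w.head? := by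
  obtain ⟨i, hi, rfl⟩ := List.getElem_of_mem (Multiset.mem_coe.mp hp)
  cases i with
  | zero => cases w <;> simp [delim]
  | succ i =>
    have hle : w.length ≤ i := by simpa [delim, List.getElem_append] using h
    have hlt : i < w.length := by simpa [delim] using hi
    omega

theorem fst_eq_getLast?_of_mem_bigrams {w : List α} {p : Option α × Option α}
    (hp : p ∈ bigrams w) (h : p.2 = none) : p.1 = w.getLast? := by
  obtain ⟨i, hi, rfl⟩ := List.getElem_of_mem (Multiset.mem_coe.mp hp)
  have hle : w.length ≤ i := by simpa [delim, List.getElem_append] using h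
  have hle' : i ≤ w.length := by simpa [delim] using hi
  obtain rfl : i = w.length := le_antisymm hle' hle
  cases w using List.reverseRecOn with
  | nil => rfl
  | append_singleton w b => simp [delim, List.getElem_cons]

theorem none_head?_mem_bigrams (w : List α) : (none, w.head?) ∈ bigrams w := by
  cases w <;> simp [bigrams, delim]

theorem getLast?_none_mem_bigrams (w : List α) : (w.getLast?, none) ∈ bigrams w := by
  cases w using List.reverseRecOn with
  | nil => simp [bigrams, delim]
  | append_singleton w b =>
    have hdelim : delim (w ++ [b]) = (none :: w.map some) ++ some b :: [none] := by simp [delim]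
    rw [List.getLast?_concat, bigrams_eq_consecutivePairs, hdelim, Multiset.mem_coe,
      List.consecutivePairs_append_cons]
    exact List.mem_append_right _ (List.mem_singleton_self _)

theorem head?_eq_of_bigrams_eq {u v : List α} (h : bigrams v = bigrams u) : v.head? = u.head? :=
  snd_eq_head?_of_mem_bigrams (h ▸ none_head?_mem_bigrams v) rfl

theorem getLast?_eq_of_bigrams_eq {u v : List α} (h : bigrams v = bigrams u) :
    v.getLast? = u.getLast? :=
  fst_eq_getLast?_of_mem_bigrams (h ▸ getLast?_none_mem_bigrams v) rfl

theorem bigrams_append_left_congr {u v : List α} (s : List α) (h : bigrams v = bigrams u) :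
    bigrams (s ++ v) = bigrams (s ++ u) := by
  have hhead := head?_eq_of_bigrams_eq h
  cases u with
  | nil => rw [List.head?_eq_none_iff.mp hhead]
  | cons a u =>
    obtain ⟨v, rfl⟩ : ∃ v', v = a :: v' := List.head?_eq_some_iff.mp hhead
    apply add_right_cancel (b := bigrams [a])
    rw [bigrams_append_cons_add, bigrams_append_cons_add, h]

theorem bigrams_append_right_congr {u v : List α} (t : List α) (h : bigrams v = bigrams u) :
    bigrams (v ++ t) = bigrams (u ++ t) := by
  have hlast := getLast?_eq_of_bigrams_eq h
  cases u using List.reverseRecOn with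
  | nil => rw [List.getLast?_eq_none_iff.mp hlast]
  | append_singleton u b =>
    obtain ⟨v, rfl⟩ : ∃ v', v = v' ++ [b] :=
      List.getLast?_eq_some_iff.mp (hlast.trans List.getLast?_concat)
    apply add_right_cancel (b := bigrams [b])
    rw [List.append_assoc, List.append_assoc, List.singleton_append, bigrams_append_cons_add,
      bigrams_append_cons_add, h]

/-- `L_UNIQ` is factorial: any factor of a uniquely decodable string is uniquely
decodable. -/
theorem stmt1 (w u : List α) (hw : UniqDec w) (hu : u <:+: w) : UniqDec u := by
  obtain ⟨s, t, rfl⟩ := hu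
  intro v hv
  have := hw (s ++ v ++ t) (bigrams_append_right_congr t (bigrams_append_left_congr s hv))
  exact List.append_cancel_left (List.append_cancel_right this)
end

section
/- For any x ∈ Σ and a, b ∈ Σ \ {x}, every string in the obstruction language K_{x,a,b} = I_{x,a,b} ∩ J_{x,a,b} is not uniquely decodable; that is, K_{x,a,b} ⊆ Σ* \ L_UNIQ. -/
/-!
Shrink the `J`-factor `a B b` to start at its last `a`, so that `a, x ∉ B`; the `I`-factor is
`a (x u) b` with `a ∉ x u`. The two factors differ right after their first letter (`x` against
the first letter of `B b`, which is not `x`), so they start at different positions, and since the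
earlier one has no interior `a`, the later one starts at or after its final `b`. Each block begins
with `a` and ends with `b`, so exchanging the two blocks (or, when `a = b` and the blocks touch,
exchanging two adjacent `a … a` blocks) preserves the multiset of bigrams but changes the string.
-/

variable {α : Type*}

/-- Membership in `I_{x,a,b} = L(Σ* a x (Σ\{a})* b Σ*)`. -/
def Imem (x a b : α) (w : List α) : Prop :=
  ∃ p u' s : List α, w = p ++ [a, x] ++ u' ++ [b] ++ s ∧ a ∉ u'

/-- Membership in `J_{x,a,b} = L(Σ* a (Σ\{x})* b Σ*)`. -/
def Jmem (x a b : α) (w : List α) : Prop :=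
  ∃ p v' s : List α, w = p ++ [a] ++ v' ++ [b] ++ s ∧ x ∉ v'

/-- The obstruction language `K_{x,a,b} = I_{x,a,b} ∩ J_{x,a,b}`. -/
def Kmem (x a b : α) (w : List α) : Prop := Imem x a b w ∧ Jmem x a b w

section AdjacentPairs

variable {β : Type*}

def adjPairs (l : List β) : Multiset (β × β) := (l.zip l.tail : List (β × β))

lemma adjPairs_append_cons (l₁ l₂ : List β) (c : β) :
    adjPairs (l₁ ++ c :: l₂) = adjPairs (l₁ ++ [c]) + adjPairs (c :: l₂) := by
  induction l₁ with
  | nil => simp [adjPairs]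
  | cons d l₁ ih =>
    cases l₁ with
    | nil => simp [adjPairs]
    | cons e l₁ => simpa [adjPairs] using ih

lemma adjPairs_cons_append_cons (c d : β) (l₁ l₂ : List β) :
    adjPairs (c :: (l₁ ++ d :: l₂)) = adjPairs (c :: l₁ ++ [d]) + adjPairs (d :: l₂) :=
  adjPairs_append_cons (c :: l₁) l₂ d

lemma adjPairs_swap (U A Q B S : List β) (a b : β) :
    adjPairs (U ++ a :: (A ++ b :: (Q ++ a :: (B ++ b :: S)))) =
      adjPairs (U ++ a :: (B ++ b :: (Q ++ a :: (A ++ b :: S)))) := by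
  have split : ∀ X Y : List β, adjPairs (U ++ a :: (X ++ b :: (Q ++ a :: (Y ++ b :: S)))) =
      adjPairs (U ++ [a]) + adjPairs (a :: X ++ [b]) + adjPairs (b :: Q ++ [a]) +
        adjPairs (a :: Y ++ [b]) + adjPairs (b :: S) := fun X Y => by
    rw [adjPairs_append_cons U, adjPairs_cons_append_cons a b X, adjPairs_cons_append_cons b a Q,
      adjPairs_cons_append_cons a b Y]
    abel
  rw [split, split]
  abel

lemma adjPairs_rotate (U A B S : List β) (c : β) :
    adjPairs (U ++ c :: (A ++ c :: (B ++ c :: S))) =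
      adjPairs (U ++ c :: (B ++ c :: (A ++ c :: S))) := by
  have split : ∀ X Y : List β, adjPairs (U ++ c :: (X ++ c :: (Y ++ c :: S))) =
      adjPairs (U ++ [c]) + adjPairs (c :: X ++ [c]) + adjPairs (c :: Y ++ [c]) +
        adjPairs (c :: S) := fun X Y => by
    rw [adjPairs_append_cons U, adjPairs_cons_append_cons c c X, adjPairs_cons_append_cons c c Y]
    abel
  rw [split, split]
  abel

end AdjacentPairs

lemma bigrams_eq_adjPairs (w : List α) : bigrams w = adjPairs (delim w) := rfl

lemma bigrams_swap (p A Q B s : List α) (a b : α) :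
    bigrams (p ++ a :: (A ++ b :: (Q ++ a :: (B ++ b :: s)))) =
      bigrams (p ++ a :: (B ++ b :: (Q ++ a :: (A ++ b :: s)))) := by
  simpa [bigrams_eq_adjPairs, delim] using
    adjPairs_swap (none :: p.map some) (A.map some) (Q.map some) (B.map some)
      (s.map some ++ [none]) (some a) (some b)

lemma bigrams_rotate (p A B s : List α) (c : α) :
    bigrams (p ++ c :: (A ++ c :: (B ++ c :: s))) =
      bigrams (p ++ c :: (B ++ c :: (A ++ c :: s))) := by
  simpa [bigrams_eq_adjPairs, delim] using
    adjPairs_rotate (none :: p.map some) (A.map some) (B.map some) (s.map some ++ [none]) (some c)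

lemma List.exists_append_of_append_eq_append_cons {A X k t : List α} {a : α} (hA : a ∉ A)
    (h : A ++ X = k ++ a :: t) : ∃ m, k = A ++ m ∧ X = m ++ a :: t := by
  rcases List.append_eq_append_iff.1 h with ⟨m, rfl, hm⟩ | ⟨m, rfl, hm⟩
  · exact ⟨m, rfl, hm⟩
  · cases m with
    | nil => exact ⟨[], by simp, by simpa using hm.symm⟩
    | cons c m =>
      obtain ⟨rfl, -⟩ := List.cons_eq_cons.1 hm
      simp at hA

lemma exists_bigrams_eq_of_length_lt {a b : α} {p q A B s r : List α} (hA : a ∉ A)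
    (hw : p ++ a :: (A ++ b :: s) = q ++ a :: (B ++ b :: r)) (hpq : p.length < q.length) :
    ∃ t, bigrams (p ++ a :: (B ++ b :: t)) = bigrams (p ++ a :: (A ++ b :: s)) := by
  rcases List.append_eq_append_iff.1 hw with ⟨_ | ⟨_, k⟩, rfl, hk⟩ | ⟨k, rfl, -⟩
  · simp at hpq
  · simp only [List.cons_append, List.cons.injEq] at hk
    obtain ⟨-, hk⟩ := hk
    obtain ⟨_ | ⟨_, Q⟩, rfl, hm⟩ := List.exists_append_of_append_eq_append_cons hA hk
    · obtain ⟨rfl, rfl⟩ := List.cons_eq_cons.1 hm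
      exact ⟨A ++ b :: r, (bigrams_rotate p A B r b).symm⟩
    · obtain ⟨rfl, rfl⟩ := List.cons_eq_cons.1 hm
      exact ⟨Q ++ a :: (A ++ b :: r), (bigrams_swap p A Q B r a b).symm⟩
  · simp at hpq

lemma List.append_cons_ne_cons {x b : α} {B r t : List α} (hxB : x ∉ B) (hbx : b ≠ x) :
    B ++ b :: r ≠ x :: t := by
  cases B with
  | nil => simp [hbx]
  | cons c B => simp_all [eq_comm]

lemma Jmem.exists_eq_append_block {x a b : α} {w : List α} (hax : a ≠ x) (hJ : Jmem x a b w) :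
    ∃ q B r, w = q ++ a :: (B ++ b :: r) ∧ a ∉ B ∧ x ∉ B := by
  obtain ⟨p, v, s, rfl, hxv⟩ := hJ
  obtain ⟨C, D, hCD, haC⟩ :=
    List.eq_append_cons_of_mem (List.mem_reverse.2 (List.mem_cons_self (a := a) (l := v)))
  have hav : a :: v = D.reverse ++ a :: C.reverse := by
    simpa using congrArg List.reverse hCD
  refine ⟨p ++ D.reverse, C.reverse, s, ?_, by simpa using haC, fun hx => ?_⟩
  · calc p ++ [a] ++ v ++ [b] ++ s = p ++ (a :: v) ++ b :: s := by simp
      _ = p ++ D.reverse ++ a :: (C.reverse ++ b :: s) := by rw [hav]; simp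
  · have : x ∈ a :: v := by simp [hav, hx]
    rcases List.mem_cons.1 this with h | h
    · exact hax h.symm
    · exact hxv h

/-- Every obstruction is not uniquely decodable: `K_{x,a,b} ⊆ Σ* \ L_UNIQ`. -/
theorem stmt2 (x a b : α) (hax : a ≠ x) (hbx : b ≠ x) (w : List α)
    (hw : Kmem x a b w) : ¬ UniqDec w := by
  obtain ⟨⟨p, u, s, hI, hau⟩, hJ⟩ := hw
  obtain ⟨q, B, r, hJ, haB, hxB⟩ := hJ.exists_eq_append_block hax
  replace hI : w = p ++ a :: ((x :: u) ++ b :: s) := by simp [hI]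
  have haxu : a ∉ x :: u := by simp [hax, hau]
  have hne : ∀ {c r' t}, c ++ a :: (B ++ b :: r') ≠ c ++ a :: (x :: t) := fun h =>
    List.append_cons_ne_cons hxB hbx (by simpa using h)
  intro huniq
  rcases lt_trichotomy p.length q.length with hpq | hpq | hpq
  · obtain ⟨t, ht⟩ := exists_bigrams_eq_of_length_lt haxu (hI.symm.trans hJ) hpq
    exact hne ((huniq _ (ht.trans (congrArg bigrams hI.symm))).trans hI)
  · obtain ⟨-, h⟩ := List.append_inj (hJ.symm.trans hI) hpq.symm
    exact hne (congrArg (p ++ ·) h)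
  · obtain ⟨t, ht⟩ := exists_bigrams_eq_of_length_lt haB (hJ.symm.trans hI) hpq
    exact hne (hJ.symm.trans ((huniq _ (ht.trans (congrArg bigrams hJ.symm))).symm))
end

section
/- If u and v are two strings over Σ that both start with the same letter a and both end with the same letter b, then for any α, β, γ ∈ Σ*, the strings α·u·β·v·γ and α·v·β·u·γ have identical bigram count vectors (with delimiters $ prepended and appended). -/
/-
Cutting a string at an occurrence of a letter `c` splits its bigram multiset into those of the
part up to and including `c` and the part from `c` on. Cutting `p·u·m·v·s` just before and
after `u` and `v` yields the pieces `p·a`, `u`, `b·m·a`, `v`, `b·s`; cutting `p·v·m·u·s` yields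
the same five pieces in another order, because `u` and `v` share their first and last letters.
The delimiters play no role.
-/

variable {α : Type*}

namespace List

variable {β : Type*}

def adjacentPairs (l : List β) : Multiset (β × β) :=
  (l.zip l.tail : List (β × β))

@[simp]
lemma adjacentPairs_singleton (x : β) : adjacentPairs [x] = 0 := rfl

@[simp]
lemma adjacentPairs_cons_cons (x y : β) (l : List β) :
    adjacentPairs (x :: y :: l) = (x, y) ::ₘ adjacentPairs (y :: l) := rfl

lemma adjacentPairs_append_cons (l r : List β) (c : β) :
    adjacentPairs (l ++ c :: r) = adjacentPairs (l ++ [c]) + adjacentPairs (c :: r) := by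
  induction l with
  | nil => simp
  | cons x l ih =>
    cases l with
    | nil => simp
    | cons y l => simpa using ih

lemma adjacentPairs_append_append {U : List β} {a b : β}
    (ha : U.head? = some a) (hb : U.getLast? = some b) (L R : List β) :
    adjacentPairs (L ++ U ++ R) =
      adjacentPairs (L ++ [a]) + adjacentPairs U + adjacentPairs (b :: R) := by
  obtain ⟨U', hU'⟩ : ∃ U', U = a :: U' := List.head?_eq_some_iff.mp ha
  obtain ⟨U'', hU''⟩ : ∃ U'', U = U'' ++ [b] := List.getLast?_eq_some_iff.mp hb
  have hUR : U ++ R = U'' ++ b :: R := by simp [hU'']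
  calc adjacentPairs (L ++ U ++ R) = adjacentPairs (L ++ [a]) + adjacentPairs (U ++ R) := by
        rw [List.append_assoc, hU', List.cons_append, adjacentPairs_append_cons L]
    _ = adjacentPairs (L ++ [a]) + adjacentPairs U + adjacentPairs (b :: R) := by
        rw [hUR, adjacentPairs_append_cons U'', ← hU'', add_assoc]

lemma adjacentPairs_append_swap {U V : List β} {a b : β}
    (hua : U.head? = some a) (hub : U.getLast? = some b)
    (hva : V.head? = some a) (hvb : V.getLast? = some b) (L M R : List β) :
    adjacentPairs (L ++ U ++ M ++ V ++ R) = adjacentPairs (L ++ V ++ M ++ U ++ R) := by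
  have split {X Y : List β} (hxa : X.head? = some a) (hxb : X.getLast? = some b)
      (hya : Y.head? = some a) (hyb : Y.getLast? = some b) :
      adjacentPairs (L ++ X ++ M ++ Y ++ R) = adjacentPairs (L ++ [a]) + adjacentPairs X +
        (adjacentPairs (b :: M ++ [a]) + adjacentPairs Y + adjacentPairs (b :: R)) := by
    have hMYR : b :: (M ++ Y ++ R) = b :: M ++ Y ++ R := by simp
    rw [List.append_assoc (L ++ X), List.append_assoc (L ++ X),
      adjacentPairs_append_append hxa hxb, hMYR, adjacentPairs_append_append hya hyb]
  rw [split hua hub hva hvb, split hva hvb hua hub]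
  abel

end List

/-- If `u` and `v` both start with `a` and end with `b`, then `α·u·β·v·γ` and
`α·v·β·u·γ` have identical bigram count vectors. -/
theorem stmt4 (a b : α) (u v p m s : List α)
    (hua : u.head? = some a) (hub : u.getLast? = some b)
    (hva : v.head? = some a) (hvb : v.getLast? = some b) :
    bigrams (p ++ u ++ m ++ v ++ s) = bigrams (p ++ v ++ m ++ u ++ s) := by
  have hdelim (x y : List α) : delim (p ++ x ++ m ++ y ++ s) =
      (none :: p.map some) ++ x.map some ++ m.map some ++ y.map some ++ (s.map some ++ [none]) := by
    simp [delim]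
  change List.adjacentPairs (delim _) = List.adjacentPairs (delim _)
  rw [hdelim, hdelim]
  exact List.adjacentPairs_append_swap (a := some a) (b := some b)
    (by simp [hua]) (by simp [hub]) (by simp [hva]) (by simp [hvb]) ..
end

section
/- L_UNIQ = Σ* \ L_OBST: a string over Σ is uniquely decodable from its bigram counts if and only if it belongs to no obstruction language K_{x,a,b}. -/
variable {α : Type*}

/-- The language of all obstructions. -/
def LObst (α : Type*) : Language α :=
  {w | ∃ x a b : α, a ≠ x ∧ b ≠ x ∧ Kmem x a b w}

/-!
Strings with the same bigrams are the Eulerian trails from `$` to `$` of one multigraph. If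
`w ∈ K_{x,a,b}`, then `w` contains a walk `a x … b` with no inner `a` and a walk `a … b` avoiding
`x`; exchanging the two walks keeps every bigram but changes the letter following that `a`.

Conversely, let `v ≠ w` have the same bigrams and first differ after a letter `a`:
`w = r a x s`, `v = r a y t`, so `a x s` and `a y t` have the same bigrams. If `w` has no
obstruction, the edge `a y` leaves the last `a` of `a x s`, and no letter of the tail after it
occurs earlier. Every edge out of that tail stays in it, so the trail `a y t` never returns to
`a`, although it must still use the edge `a x`.
-/

namespace Bigram

section Lists

variable {β : Type*}

def adjPairs (l : List β) : Multiset (β × β) := l.zip l.tail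

theorem adjPairs_append_cons (l₁ : List β) (c : β) (l₂ : List β) :
    adjPairs (l₁ ++ c :: l₂) = adjPairs (l₁ ++ [c]) + adjPairs (c :: l₂) := by
  induction l₁ with
  | nil => simp [adjPairs]
  | cons d l₁ ih =>
    cases l₁ with
    | nil => simp [adjPairs]
    | cons e l₁ =>
      simpa [adjPairs] using ih

theorem adjPairs_cons_append_cons (c : β) (l₁ : List β) (d : β) (l₂ : List β) :
    adjPairs (c :: (l₁ ++ d :: l₂)) = adjPairs (c :: (l₁ ++ [d])) + adjPairs (d :: l₂) :=
  adjPairs_append_cons (c :: l₁) d l₂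

theorem adjPairs_two_loops (A : List β) (c : β) (B D F : List β) :
    adjPairs (A ++ c :: (B ++ c :: (D ++ c :: F))) =
      adjPairs (A ++ [c]) + adjPairs (c :: (B ++ [c])) + adjPairs (c :: (D ++ [c])) +
        adjPairs (c :: F) := by
  rw [adjPairs_append_cons, adjPairs_cons_append_cons c B, adjPairs_cons_append_cons c D,
    add_assoc, add_assoc]

theorem adjPairs_two_paths (A : List β) (c : β) (B : List β) (d : β) (C D F : List β) :
    adjPairs (A ++ c :: (B ++ d :: (C ++ c :: (D ++ d :: F)))) =
      adjPairs (A ++ [c]) + adjPairs (c :: (B ++ [d])) + adjPairs (d :: (C ++ [c])) +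
        adjPairs (c :: (D ++ [d])) + adjPairs (d :: F) := by
  rw [adjPairs_append_cons, adjPairs_cons_append_cons c B, adjPairs_cons_append_cons d C,
    adjPairs_cons_append_cons c D]
  abel

theorem adjPairs_swap_loops (A : List β) (c : β) (B D F : List β) :
    adjPairs (A ++ c :: (B ++ c :: (D ++ c :: F))) =
      adjPairs (A ++ c :: (D ++ c :: (B ++ c :: F))) := by
  rw [adjPairs_two_loops, adjPairs_two_loops]
  abel

theorem adjPairs_swap_paths (A : List β) (c : β) (B : List β) (d : β) (C D F : List β) :
    adjPairs (A ++ c :: (B ++ d :: (C ++ c :: (D ++ d :: F)))) =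
      adjPairs (A ++ c :: (D ++ d :: (C ++ c :: (B ++ d :: F)))) := by
  rw [adjPairs_two_paths, adjPairs_two_paths]
  abel

theorem exists_eq_append_cons_notMem_right {a : β} {l : List β} (h : a ∈ l) :
    ∃ s t, l = s ++ a :: t ∧ a ∉ t := by
  obtain ⟨s, t, hl, ha⟩ := List.eq_append_cons_of_mem (List.mem_reverse.2 h)
  exact ⟨t.reverse, s.reverse, by simpa using congrArg List.reverse hl, by simpa using ha⟩

theorem mem_of_infix_of_disjoint {P Q : List β} {z z' : β} (hPQ : P.Disjoint Q)
    (h : [z, z'] <:+: P ++ Q) (hz : z ∈ Q) : z' ∈ Q := by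
  obtain ⟨n₁, n₂, h⟩ := h
  rcases List.append_eq_append_iff.1 (by simpa using h : n₁ ++ z :: z' :: n₂ = P ++ Q) with
    ⟨_ | ⟨d, c⟩, rfl, hQ⟩ | ⟨c, -, rfl⟩
  · rw [List.nil_append] at hQ
    simp [← hQ]
  · obtain ⟨rfl, -⟩ := List.cons.inj hQ
    exact absurd hz (hPQ (by simp))
  · simp

theorem exists_segment_of_mem {a e : β} {w p r : List β} (hw : a :: w = p ++ r) (he : e ∈ p)
    (hea : e ≠ a) (har : a ∈ r) : ∃ G Z H, a :: w = G ++ a :: (Z ++ a :: H) ∧ a ∉ Z ∧ e ∈ Z := by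
  obtain ⟨P₁, P₂, rfl⟩ := List.append_of_mem he
  have haP₁ : a ∈ P₁ := by
    cases P₁ with
    | nil => exact absurd (List.cons.inj hw).1.symm hea
    | cons c P₁ => exact (List.cons.inj hw).1 ▸ List.mem_cons_self ..
  obtain ⟨G, G₂, rfl, haG₂⟩ := exists_eq_append_cons_notMem_right haP₁
  obtain ⟨H₁, H, hH, haH₁⟩ := List.eq_append_cons_of_mem (show a ∈ P₂ ++ r by simp [har])
  exact ⟨G, G₂ ++ e :: H₁, H, by rw [hw]; simp [hH], by simp [haG₂, hea.symm, haH₁], by simp⟩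

end Lists

theorem bigrams_eq_adjPairs (w : List α) : bigrams w = adjPairs (delim w) := rfl

theorem bigrams_swap_loops (p : List α) (a : α) (L M S : List α) :
    bigrams (p ++ a :: (L ++ a :: (M ++ a :: S))) =
      bigrams (p ++ a :: (M ++ a :: (L ++ a :: S))) := by
  simpa [bigrams_eq_adjPairs, delim] using
    adjPairs_swap_loops (none :: p.map some) (some a) (L.map some) (M.map some)
      (S.map some ++ [none])

theorem bigrams_swap_paths (p : List α) (a : α) (L : List α) (b : α) (M L' S : List α) :
    bigrams (p ++ a :: (L ++ b :: (M ++ a :: (L' ++ b :: S)))) =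
      bigrams (p ++ a :: (L' ++ b :: (M ++ a :: (L ++ b :: S)))) := by
  simpa [bigrams_eq_adjPairs, delim] using
    adjPairs_swap_paths (none :: p.map some) (some a) (L.map some) (some b) (M.map some)
      (L'.map some) (S.map some ++ [none])

/-- The bigrams of `w$`: those of `$w$` without the leading `($, head)`. -/
def rbigrams (w : List α) : Multiset (Option α × Option α) := adjPairs (w.map some ++ [none])

theorem bigrams_cons (c : α) (w : List α) :
    bigrams (c :: w) = (none, some c) ::ₘ rbigrams (c :: w) := rfl

theorem rbigrams_cons_cons (c d : α) (w : List α) :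
    rbigrams (c :: d :: w) = (some c, some d) ::ₘ rbigrams (d :: w) := rfl

theorem card_rbigrams (w : List α) : Multiset.card (rbigrams w) = w.length := by
  simp [rbigrams, adjPairs]

theorem card_bigrams (w : List α) : Multiset.card (bigrams w) = w.length + 1 := by
  simp [bigrams, delim]

theorem mem_rbigrams_iff_infix {z z' : α} {w : List α} :
    (some z, some z') ∈ rbigrams w ↔ [z, z'] <:+: w := by
  induction w with
  | nil => simp [rbigrams, adjPairs]
  | cons c w ih =>
    cases w with
    | nil => simpa [rbigrams, adjPairs] using fun h => by simpa using h.length_le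
    | cons d w =>
      rw [rbigrams_cons_cons, Multiset.mem_cons, ih, List.infix_cons_iff (a := c)]
      simp

theorem none_fst_notMem_rbigrams (o : Option α) (w : List α) : (none, o) ∉ rbigrams w := by
  induction w with
  | nil => simp [rbigrams, adjPairs]
  | cons c w ih =>
    cases w with
    | nil => simp [rbigrams, adjPairs]
    | cons d w =>
      rw [rbigrams_cons_cons, Multiset.mem_cons]
      simpa using ih

theorem Jmem.exists_notMem {x a b : α} {w : List α} (h : Jmem x a b w) :
    ∃ p v s, w = p ++ a :: (v ++ b :: s) ∧ x ∉ v ∧ a ∉ v := by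
  obtain ⟨p, v, s, rfl, hxv⟩ := h
  by_cases hav : a ∈ v
  · obtain ⟨v₁, v₂, rfl, hav₂⟩ := exists_eq_append_cons_notMem_right hav
    exact ⟨p ++ a :: v₁, v₂, s, by simp, fun h => hxv (by simp [h]), hav₂⟩
  · exact ⟨p, v, s, by simp, hxv, hav⟩

theorem cons_ne_append_cons {x b : α} {u v R : List α} (hxv : x ∉ v) (hbx : b ≠ x) :
    x :: u ≠ v ++ b :: R := by
  intro h
  cases v with
  | nil => exact hbx (List.cons.inj h).1.symm
  | cons c v => exact hxv ((List.cons.inj h).1 ▸ List.mem_cons_self ..)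

theorem exists_bigrams_eq_swap {a b : α} {w p L s p' L' s' : List α}
    (hw : w = p ++ a :: (L ++ b :: s)) (haL : a ∉ L) (hw' : w = p' ++ a :: (L' ++ b :: s'))
    (hlt : p.length < p'.length) : ∃ R, bigrams (p ++ a :: (L' ++ b :: R)) = bigrams w := by
  obtain ⟨c, rfl, hc⟩ : ∃ c, p' = p ++ a :: c ∧ L ++ b :: s = c ++ a :: (L' ++ b :: s') := by
    rcases List.append_eq_append_iff.1 (hw.symm.trans hw') with ⟨_ | ⟨d, c⟩, rfl, h⟩ | ⟨e, rfl, -⟩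
    · simp at hlt
    · obtain ⟨rfl, hc⟩ := List.cons.inj h
      exact ⟨c, rfl, hc⟩
    · simp at hlt
  subst hw
  rcases List.append_eq_append_iff.1 hc with ⟨_ | ⟨d, M⟩, rfl, h⟩ | ⟨_ | ⟨d, e⟩, rfl, h⟩
  · obtain ⟨rfl, rfl⟩ := List.cons.inj h
    exact ⟨L ++ b :: s', by simpa using (bigrams_swap_loops p b L L' s').symm⟩
  · obtain ⟨rfl, rfl⟩ := List.cons.inj h
    exact ⟨M ++ a :: (L ++ b :: s'), by simpa using (bigrams_swap_paths p a L b M L' s').symm⟩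
  · obtain ⟨rfl, rfl⟩ := List.cons.inj h
    exact ⟨c ++ a :: s', by simpa using (bigrams_swap_loops p a c L' s').symm⟩
  · obtain ⟨rfl, -⟩ := List.cons.inj h
    simp at haL

theorem not_uniqDec_of_mem_LObst {w : List α} (hw : w ∈ LObst α) : ¬ UniqDec w := by
  obtain ⟨x, a, b, hax, hbx, ⟨p, u, s, hI, hau⟩, hJ⟩ := hw
  obtain ⟨q, v, t, hJ, hxv, hav⟩ := Jmem.exists_notMem hJ
  replace hI : w = p ++ a :: ((x :: u) ++ b :: s) := by simpa using hI
  have haxu : a ∉ x :: u := by simp [hax, hau]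
  intro huniq
  rcases lt_trichotomy p.length q.length with hlt | heq | hgt
  · obtain ⟨R, hR⟩ := exists_bigrams_eq_swap hI haxu hJ hlt
    have := huniq _ hR
    rw [hI] at this
    exact cons_ne_append_cons hxv hbx (by simpa using this.symm)
  · obtain ⟨rfl, h⟩ := List.append_inj (hI.symm.trans hJ) heq
    exact cons_ne_append_cons hxv hbx (by simpa using h)
  · obtain ⟨R, hR⟩ := exists_bigrams_eq_swap hJ hav hI hgt
    have := huniq _ hR
    rw [hJ] at this
    exact cons_ne_append_cons hxv hbx (by simpa using this)

theorem cons_mem_LObst (c : α) {w : List α} (h : w ∈ LObst α) : c :: w ∈ LObst α := by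
  obtain ⟨x, a, b, hax, hbx, ⟨p, u, s, hI, hu⟩, ⟨q, v, t, hJ, hv⟩⟩ := h
  exact ⟨x, a, b, hax, hbx, ⟨c :: p, u, s, by rw [hI]; simp, hu⟩,
    ⟨c :: q, v, t, by rw [hJ]; simp, hv⟩⟩

theorem mem_LObst_of_return {a x y : α} {s p q : List α} (hxy : x ≠ y)
    (hw : a :: x :: s = p ++ a :: y :: q) (ha : a ∈ y :: q) : a :: x :: s ∈ LObst α := by
  obtain ⟨p, rfl⟩ : ∃ p', p = a :: p' := by
    cases p with
    | nil => exact absurd (List.cons.inj (List.cons.inj hw).2).1 hxy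
    | cons c p => exact ⟨p, (List.cons.inj hw).1 ▸ rfl⟩
  have hxs : x :: s = p ++ a :: y :: q := (List.cons.inj hw).2
  obtain ⟨S, R, hS, haS⟩ := List.eq_append_cons_of_mem (show a ∈ x :: s by simp [hxs])
  by_cases hya : y = a
  · subst hya
    obtain ⟨S, rfl⟩ : ∃ S', S = x :: S' := by
      cases S with
      | nil => exact absurd (List.cons.inj hS).1 hxy
      | cons c S => exact ⟨S, (List.cons.inj hS).1 ▸ rfl⟩
    exact ⟨x, y, y, hxy.symm, hxy.symm, ⟨[], S, R, by simp [hS], fun h => haS (by simp [h])⟩,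
      ⟨y :: p, [], q, by simp [hxs], by simp⟩⟩
  obtain ⟨Q, Q', rfl, haQ⟩ := List.eq_append_cons_of_mem
    ((List.mem_cons.1 ha).resolve_left fun h => hya h.symm)
  by_cases hyS : y ∈ S
  · obtain ⟨S, rfl⟩ : ∃ S', S = x :: S' := by
      cases S with
      | nil => simp at hyS
      | cons c S => exact ⟨S, (List.cons.inj hS).1 ▸ rfl⟩
    obtain ⟨S₁, S₂, rfl⟩ := List.append_of_mem ((List.mem_cons.1 hyS).resolve_left hxy.symm)
    exact ⟨x, a, y, fun h => haS (by simp [h]), hxy.symm,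
      ⟨[], S₁, S₂ ++ a :: R, by simp [hS], fun h => haS (by simp [h])⟩,
      ⟨a :: p, [], Q ++ a :: Q', by simp [hxs], by simp⟩⟩
  · exact ⟨y, a, a, fun h => hya h.symm, fun h => hya h.symm,
      ⟨a :: p, Q, Q', by simp [hxs], haQ⟩, ⟨[], S, R, by simp [hS], hyS⟩⟩

theorem mem_LObst_of_mem_segment {a x y e : α} {s p q G Z H : List α} (hxy : x ≠ y)
    (hw : a :: x :: s = p ++ a :: y :: q) (haq : a ∉ y :: q)
    (hseg : a :: x :: s = G ++ a :: (Z ++ a :: H)) (haZ : a ∉ Z) (heZ : e ∈ Z)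
    (heq : e ∈ y :: q) : a :: x :: s ∈ LObst α := by
  obtain ⟨m, Z, rfl⟩ := List.exists_cons_of_ne_nil (List.ne_nil_of_mem heZ)
  have ham : a ≠ m := fun h => haZ (by simp [h])
  by_cases hmq : m ∈ y :: q
  · by_cases hmy : m = y
    · subst hmy
      exact mem_LObst_of_return (p := G) (q := Z ++ a :: H) hxy (by simpa using hseg) (by simp)
    · obtain ⟨q₁, q₂, rfl⟩ := List.append_of_mem ((List.mem_cons.1 hmq).resolve_left hmy)
      exact ⟨y, a, m, fun h => haq (by simp [h]), hmy,
        ⟨p, q₁, q₂, by rw [hw]; simp, fun h => haq (by simp [h])⟩,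
        ⟨G, [], Z ++ a :: H, by rw [hseg]; simp, by simp⟩⟩
  · have hem : e ≠ m := fun h => hmq (h ▸ heq)
    obtain ⟨Z₁, Z₂, rfl⟩ := List.append_of_mem ((List.mem_cons.1 heZ).resolve_left hem)
    obtain ⟨V, V', hV⟩ := List.append_of_mem heq
    exact ⟨m, a, e, ham, hem,
      ⟨G, Z₁, Z₂ ++ a :: H, by rw [hseg]; simp, fun h => haZ (by simp [h])⟩,
      ⟨p, V, V', by rw [hw, hV]; simp, fun h => hmq (by simp [hV, h])⟩⟩

theorem exists_disjoint_split {a x y : α} {s : List α} (hw : a :: x :: s ∉ LObst α)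
    (hxy : x ≠ y) (hay : [a, y] <:+: a :: x :: s) :
    ∃ p q, a :: x :: s = p ++ a :: y :: q ∧ (p ++ [a]).Disjoint (y :: q) := by
  obtain ⟨p, q, hpq⟩ := hay
  replace hpq : a :: x :: s = p ++ a :: y :: q := by simpa using hpq.symm
  have haq : a ∉ y :: q := fun h => hw (mem_LObst_of_return hxy hpq h)
  refine ⟨p, q, hpq, fun e hep heq => ?_⟩
  rcases List.mem_append.1 hep with hep | hea
  · have hea : e ≠ a := fun h => haq (h ▸ heq)
    obtain ⟨G, Z, H, hseg, haZ, heZ⟩ := exists_segment_of_mem hpq hep hea (by simp)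
    exact hw (mem_LObst_of_mem_segment hxy hpq haq hseg haZ heZ heq)
  · exact haq (by simpa [List.mem_singleton.1 hea] using heq)

theorem mem_LObst_of_rbigrams_eq {a x y : α} {s t : List α} (hxy : x ≠ y)
    (h : rbigrams (a :: x :: s) = rbigrams (a :: y :: t)) : a :: x :: s ∈ LObst α := by
  by_contra hw
  have hadj (z z' : α) : [z, z'] <:+: a :: x :: s ↔ [z, z'] <:+: a :: y :: t := by
    rw [← mem_rbigrams_iff_infix, ← mem_rbigrams_iff_infix, h]
  obtain ⟨p, q, hpq, hdisj⟩ :=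
    exists_disjoint_split hw hxy ((hadj a y).2 (List.prefix_append [a, y] t).isInfix)
  have hchain : List.IsChain (fun z z' => [z, z'] <:+: a :: y :: t) (y :: t) :=
    List.isChain_iff_forall_rel_of_append_cons_cons.2 fun z z' l₁ l₂ h =>
      ⟨a :: l₁, l₂, by simp [h]⟩
  have hconf : ∀ z ∈ y :: t, z ∈ y :: q :=
    hchain.induction _ _
      (fun z z' hzz' hz =>
        mem_of_infix_of_disjoint hdisj (by simpa [hpq] using (hadj z z').2 hzz') hz)
      (fun _ => by simp)
  have hax : [a, x] <:+: y :: t :=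
    (List.infix_cons_iff.1 ((hadj a x).1 (List.prefix_append [a, x] s).isInfix)).resolve_left
      (by simp [hxy])
  exact hdisj (by simp : a ∈ p ++ [a]) (hconf a (hax.subset (by simp)))

theorem eq_of_rbigrams_eq {c : α} {u u' : List α} (hw : c :: u ∉ LObst α)
    (h : rbigrams (c :: u) = rbigrams (c :: u')) : u = u' := by
  have hlen := congrArg Multiset.card h
  simp only [card_rbigrams, List.length_cons, add_left_inj] at hlen
  induction u generalizing c u' with
  | nil => exact (List.length_eq_zero_iff.1 hlen.symm).symm
  | cons x s ih =>
    obtain ⟨y, t, rfl⟩ := List.exists_cons_of_length_eq_add_one hlen.symm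
    by_cases hxy : x = y
    · subst hxy
      rw [rbigrams_cons_cons, rbigrams_cons_cons, Multiset.cons_inj_right] at h
      rw [ih (fun hs => hw (cons_mem_LObst c hs)) h (by simpa using hlen)]
    · exact absurd (mem_LObst_of_rbigrams_eq hxy h) hw

theorem uniqDec_of_notMem_LObst {w : List α} (hw : w ∉ LObst α) : UniqDec w := by
  intro v h
  have hlen := congrArg Multiset.card h
  rw [card_bigrams, card_bigrams] at hlen
  cases w with
  | nil => simpa using hlen
  | cons c s =>
    obtain ⟨d, t, rfl⟩ := List.exists_cons_of_length_eq_add_one (by simpa using hlen)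
    rw [bigrams_cons, bigrams_cons] at h
    obtain rfl : d = c := by
      have hd : (none, some d) ∈ (none, some c) ::ₘ rbigrams (c :: s) :=
        h ▸ Multiset.mem_cons_self _ _
      simpa [none_fst_notMem_rbigrams] using hd
    rw [eq_of_rbigrams_eq hw (Multiset.cons_inj_right _ |>.1 h).symm]

end Bigram

theorem stmt6_general (α : Type) : {w : List α | UniqDec w} = Set.univ \ LObst α := by
  ext w
  exact ⟨fun hw => ⟨trivial, fun hmem => Bigram.not_uniqDec_of_mem_LObst hmem hw⟩,
    fun hw => Bigram.uniqDec_of_notMem_LObst hw.2⟩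

/-- `L_UNIQ = Σ* \ L_OBST`: a string is uniquely decodable iff it belongs to no
obstruction language `K_{x,a,b}`. -/
theorem stmt6 (α : Type) [Fintype α] :
    {w : List α | UniqDec w} = Set.univ \ LObst α :=
  stmt6_general α
end

section
/- The language L_UNIQ of uniquely decodable strings over a finite alphabet Σ is regular. -/
/-!
Read `delim w` as a trail in the complete digraph on `Option α`: `bigrams w` is its multiset of
edges, and the strings with the same bigrams are the Euler trails of that multiset from `$` to
`$`. If `v ≠ w` share their bigrams, then just before the longest common suffix `x :: A` of
`delim v` and `delim w` the two prefixes are trails from `$` with the same edges into `x` but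
different last vertices. Hence `w` is uniquely decodable iff every prefix `B` of `delim w`
followed by `x` is the only way, up to its last vertex, of traversing the edges of `B ++ [x]`.

By Euler's theorem, whether a rival trail exists depends only on the support and the degree
balance of the edge multiset, so only on the bigram counts of `B` capped at 2, the first and last
vertex of `B` and `x`. Together with a bit recording whether the condition held for all earlier
prefixes this is a finite state, updated letter by letter, and Myhill–Nerode gives regularity.
-/

variable {α : Type*}

open Relation

namespace List

variable {β : Type*}

def edges (l : List β) : Multiset (β × β) := l.zip l.tail

@[simp] lemma edges_singleton (x : β) : [x].edges = 0 := rfl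

@[simp] lemma edges_cons_cons (x y : β) (l : List β) :
    (x :: y :: l).edges = (x, y) ::ₘ (y :: l).edges := rfl

lemma edges_cons_of_head? {l : List β} {t : β} (h : l.head? = some t) (a : β) :
    (a :: l).edges = (a, t) ::ₘ l.edges := by
  obtain ⟨l, rfl⟩ := head?_eq_some_iff.1 h
  rfl

lemma card_edges (l : List β) : l.edges.card = l.length - 1 := by
  simp [edges]

lemma mem_of_mem_edges {u v : β} {l : List β} (h : (u, v) ∈ l.edges) : u ∈ l ∧ v ∈ l :=
  (of_mem_zip (Multiset.mem_coe.1 h)).imp_right mem_of_mem_tail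

lemma edges_append_cons (B : List β) (x : β) (A : List β) :
    (B ++ x :: A).edges = (B ++ [x]).edges + (x :: A).edges := by
  induction B with
  | nil => simp
  | cons b B ih =>
    cases B with
    | nil => simp
    | cons c C =>
      simp only [cons_append, edges_cons_cons] at ih ⊢
      rw [ih, Multiset.cons_add]

lemma edges_append_singleton {B : List β} {u : β} (h : B.getLast? = some u) (x : β) :
    (B ++ [x]).edges = (u, x) ::ₘ B.edges := by
  obtain ⟨B, rfl⟩ := getLast?_eq_some_iff.1 h
  rw [append_assoc, singleton_append, edges_append_cons, add_comm]
  rfl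

lemma cons_map_snd_edges {l : List β} {a : β} (h : l.head? = some a) :
    a ::ₘ l.edges.map Prod.snd = l := by
  obtain ⟨l, rfl⟩ := head?_eq_some_iff.1 h
  simp [edges, map_snd_zip]

lemma cons_map_fst_edges {l : List β} {b : β} (h : l.getLast? = some b) :
    b ::ₘ l.edges.map Prod.fst = l := by
  induction l with
  | nil => simp at h
  | cons x l ih =>
    rcases l with _ | ⟨t, l⟩
    · simp_all
    · rw [getLast?_cons_cons] at h
      rw [edges_cons_cons, Multiset.map_cons, Multiset.cons_swap, ih h]
      rfl

lemma coe_eq_of_edges_eq {l₁ l₂ : List β} {a : β} (h₁ : l₁.head? = some a)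
    (h₂ : l₂.head? = some a) (h : l₁.edges = l₂.edges) : (l₁ : Multiset β) = l₂ := by
  rw [← cons_map_snd_edges h₁, ← cons_map_snd_edges h₂, h]

lemma reflTransGen_of_mem {l : List β} {a v : β} (ha : l.head? = some a) (hv : v ∈ l) :
    ReflTransGen (fun u w => (u, w) ∈ l.edges) a v := by
  induction l generalizing a with
  | nil => simp at hv
  | cons x l ih =>
    obtain rfl : x = a := by simpa using ha
    rcases mem_cons.1 hv with rfl | hv
    · exact .refl
    obtain ⟨t, l, rfl⟩ := ne_nil_iff_exists_cons.1 (ne_nil_of_mem hv)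
    refine .head (b := t) (by simp) (ReflTransGen.mono (fun u w h => ?_) _ _ (ih rfl hv))
    simp [h]

end List

section Euler

variable {β : Type*}

open List

def HasEulerTrail (N : Multiset (β × β)) (a b : β) : Prop :=
  ∃ l : List β, l.head? = some a ∧ l.getLast? = some b ∧ l.edges = N

lemma exists_trail_splice {l K : List β} {a b v : β} (ha : l.head? = some a)
    (hb : l.getLast? = some b) (hv : v ∈ l) (hK₁ : K.head? = some v) (hK₂ : K.getLast? = some v) :
    ∃ l' : List β, l'.head? = some a ∧ l'.getLast? = some b ∧ l'.edges = l.edges + K.edges := by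
  obtain ⟨l₁, l₂, rfl⟩ := append_of_mem hv
  obtain ⟨Kt, rfl⟩ := head?_eq_some_iff.1 hK₁
  obtain ⟨Ki, hKi⟩ := getLast?_eq_some_iff.1 hK₂
  have hl' : l₁ ++ v :: Kt ++ l₂ = l₁ ++ Ki ++ v :: l₂ := by simp [hKi]
  refine ⟨l₁ ++ v :: Kt ++ l₂, by simpa [head?_append] using ha, ?_, ?_⟩
  · rwa [hl', getLast?_append_of_ne_nil _ (cons_ne_nil _ _),
      ← getLast?_append_of_ne_nil l₁ (cons_ne_nil _ _)]
  · rw [hl', edges_append_cons, append_assoc, ← hKi, edges_append_cons l₁ v Kt,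
      edges_append_cons l₁ v l₂]
    exact add_right_comm (G := Multiset (β × β)) _ _ _

variable [DecidableEq β]

theorem exists_maximal_trail (N : Multiset (β × β)) (a : β) :
    ∃ (l : List β) (u : β), l.head? = some a ∧ l.getLast? = some u ∧ l.edges ≤ N ∧
      u ∉ (N - l.edges).map Prod.fst := by
  by_cases h : ∃ t, (a, t) ∈ N
  · obtain ⟨t, ht⟩ := h
    have := Multiset.card_erase_lt_of_mem ht
    obtain ⟨l, u, hl, hu, hle, hmax⟩ := exists_maximal_trail (N.erase (a, t)) t
    have hl' : l ≠ [] := by rintro rfl; simp at hl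
    refine ⟨a :: l, u, rfl, by rwa [getLast?_cons_of_ne_nil hl'], ?_, ?_⟩
    · rw [edges_cons_of_head? hl]
      exact (Multiset.cons_le_cons _ hle).trans_eq (Multiset.cons_erase ht)
    · rwa [edges_cons_of_head? hl, Multiset.sub_cons]
  · refine ⟨[a], a, rfl, rfl, by simp, ?_⟩
    simpa using h
termination_by N.card

lemma eq_of_maximal_trail {N : Multiset (β × β)} {a b u : β} {l : List β}
    (hbal : b ::ₘ N.map Prod.fst = a ::ₘ N.map Prod.snd)
    (ha : l.head? = some a) (hu : l.getLast? = some u) (hle : l.edges ≤ N)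
    (hmax : u ∉ (N - l.edges).map Prod.fst) :
    u = b ∧ (N - l.edges).map Prod.fst = (N - l.edges).map Prod.snd := by
  set R := N - l.edges
  have hN : N = l.edges + R := (add_tsub_cancel_of_le hle).symm
  have htrail : u ::ₘ l.edges.map Prod.fst = a ::ₘ l.edges.map Prod.snd :=
    (cons_map_fst_edges hu).trans (cons_map_snd_edges ha).symm
  have hR : b ::ₘ R.map Prod.fst = u ::ₘ R.map Prod.snd := by
    rw [hN, Multiset.map_add, Multiset.map_add] at hbal
    apply add_left_cancel (a := l.edges.map Prod.fst)
    rw [Multiset.add_cons, hbal, ← Multiset.cons_add, ← htrail, Multiset.cons_add,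
      Multiset.add_cons]
  obtain rfl : u = b := by
    have hmem : u ∈ b ::ₘ R.map Prod.fst := hR ▸ Multiset.mem_cons_self _ _
    exact (Multiset.mem_cons.1 hmem).resolve_right hmax
  exact ⟨rfl, (Multiset.cons_inj_right u).1 hR⟩

lemma exists_closed_trail {N : Multiset (β × β)} (hbal : N.map Prod.fst = N.map Prod.snd)
    {v : β} (hv : v ∈ N.map Prod.fst) :
    ∃ K : List β, K.head? = some v ∧ K.getLast? = some v ∧ K.edges ≤ N ∧ K.edges ≠ 0 := by
  obtain ⟨K, u, hK, hu, hle, hmax⟩ := exists_maximal_trail N v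
  obtain ⟨rfl, -⟩ := eq_of_maximal_trail (by rw [hbal]) hK hu hle hmax
  refine ⟨K, hK, hu, hle, fun h0 => hmax ?_⟩
  rwa [h0, tsub_zero]

lemma exists_mem_map_fst_sub {N : Multiset (β × β)} {a : β} {l : List β}
    (hreach : ∀ e ∈ N, ReflTransGen (fun u w => (u, w) ∈ N) a e.1)
    (ha : l.head? = some a) (h0 : N - l.edges ≠ 0) :
    ∃ v ∈ l, v ∈ (N - l.edges).map Prod.fst := by
  have hpath : ∀ z, ReflTransGen (fun u w => (u, w) ∈ N) a z →
      z ∈ l ∨ ∃ v ∈ l, v ∈ (N - l.edges).map Prod.fst := by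
    intro z hz
    induction hz with
    | refl => exact .inl (mem_of_head? ha)
    | @tail y z _ hyz ih =>
      refine ih.elim (fun hy => ?_) .inr
      by_cases hrem : (y, z) ∈ N - l.edges
      · exact .inr ⟨y, hy, Multiset.mem_map_of_mem Prod.fst hrem⟩
      · have : (y, z) ∈ l.edges := by
          rw [Multiset.mem_sub, not_lt] at hrem
          exact Multiset.count_pos.1 ((Multiset.count_pos.2 hyz).trans_le hrem)
        exact .inl (mem_of_mem_edges this).2
  obtain ⟨e, he⟩ := Multiset.exists_mem_of_ne_zero h0
  refine (hpath e.1 (hreach e (Multiset.mem_of_le tsub_le_self he))).elim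
    (fun h => ⟨e.1, h, Multiset.mem_map_of_mem Prod.fst he⟩) id

theorem hasEulerTrail_of_trail_le {N : Multiset (β × β)} {a b : β} {l : List β}
    (hreach : ∀ e ∈ N, ReflTransGen (fun u w => (u, w) ∈ N) a e.1)
    (ha : l.head? = some a) (hb : l.getLast? = some b) (hle : l.edges ≤ N)
    (hR : (N - l.edges).map Prod.fst = (N - l.edges).map Prod.snd) : HasEulerTrail N a b := by
  by_cases h0 : N - l.edges = 0
  · exact ⟨l, ha, hb, le_antisymm hle (tsub_eq_zero_iff_le.1 h0)⟩
  obtain ⟨v, hvl, hv⟩ := exists_mem_map_fst_sub hreach ha h0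
  obtain ⟨K, hK₁, hK₂, hKle, hK0⟩ := exists_closed_trail hR hv
  obtain ⟨l', ha', hb', hedges⟩ := exists_trail_splice ha hb hvl hK₁ hK₂
  obtain ⟨R', hR'⟩ := Multiset.le_iff_exists_add.1 hKle
  have hsub : N - l'.edges = R' := by
    rw [hedges, tsub_add_eq_tsub_tsub, hR', add_tsub_cancel_left]
  have hK : K.edges.map Prod.fst = K.edges.map Prod.snd :=
    (Multiset.cons_inj_right v).1 ((cons_map_fst_edges hK₂).trans (cons_map_snd_edges hK₁).symm)
  have : (N - l'.edges).card < (N - l.edges).card := by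
    rw [hsub, hR', Multiset.card_add, lt_add_iff_pos_left, Multiset.card_pos]
    exact hK0
  refine hasEulerTrail_of_trail_le hreach ha' hb' ?_ ?_
  · rw [hedges]
    exact (le_tsub_iff_left hle).1 hKle
  · rw [hR', Multiset.map_add, Multiset.map_add, hK] at hR
    rw [hsub]
    exact add_left_cancel hR
termination_by (N - l.edges).card

theorem hasEulerTrail_of_balanced {N : Multiset (β × β)} {a b : β}
    (hbal : b ::ₘ N.map Prod.fst = a ::ₘ N.map Prod.snd)
    (hreach : ∀ e ∈ N, ReflTransGen (fun u w => (u, w) ∈ N) a e.1) : HasEulerTrail N a b := by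
  obtain ⟨l, u, ha, hu, hle, hmax⟩ := exists_maximal_trail N a
  obtain ⟨rfl, hR⟩ := eq_of_maximal_trail hbal ha hu hle hmax
  exact hasEulerTrail_of_trail_le hreach ha hu hle hR

end Euler

section Rigidity

variable {β : Type*}

open List

def truncCount [DecidableEq β] (N : Multiset β) (e : β) : Fin 3 := ⟨min (N.count e) 2, by omega⟩

lemma truncCount_cons_congr [DecidableEq β] {M N : Multiset β} (h : truncCount M = truncCount N)
    (a : β) : truncCount (a ::ₘ M) = truncCount (a ::ₘ N) := by
  funext e
  have := congrFun h e
  simp only [truncCount, Fin.ext_iff, Multiset.count_cons] at this ⊢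
  omega

lemma mem_congr_of_truncCount_eq [DecidableEq β] {M N : Multiset β}
    (h : truncCount M = truncCount N) (e : β) : e ∈ M ↔ e ∈ N := by
  have := congrFun h e
  simp only [truncCount, Fin.ext_iff] at this
  rw [← Multiset.count_pos, ← Multiset.count_pos]
  omega

lemma mem_erase_congr_of_truncCount_eq [DecidableEq β] {M N : Multiset β}
    (h : truncCount M = truncCount N) (a e : β) : e ∈ M.erase a ↔ e ∈ N.erase a := by
  have := congrFun h e
  simp only [truncCount, Fin.ext_iff] at this
  rw [← Multiset.count_pos, ← Multiset.count_pos]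
  by_cases hea : e = a
  · subst hea
    simp only [Multiset.count_erase_self]
    omega
  · simp only [Multiset.count_erase_of_ne hea]
    omega

def LastDetermined (B : List β) (x : β) : Prop :=
  ∀ B' : List β, B'.head? = B.head? → (B' ++ [x]).edges = (B ++ [x]).edges →
    B'.getLast? = B.getLast?

def PrefixDetermined (l : List β) : Prop :=
  ∀ B x A, l = B ++ x :: A → B ≠ [] → LastDetermined B x

-- A rival trail for `B₂ ++ [x]` entering `x` from `t` is transported to `B₁` by Euler's theorem:
-- counts capped at 2 still see which edges survive erasing `(t, x)`, and the degree balance of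
-- what is left depends only on the endpoints `a` and `t`.
theorem LastDetermined.of_truncCount_eq [DecidableEq β] {B₁ B₂ : List β} {a p x : β}
    (ha₁ : B₁.head? = some a) (ha₂ : B₂.head? = some a) (hp₁ : B₁.getLast? = some p)
    (hp₂ : B₂.getLast? = some p) (hcap : truncCount B₁.edges = truncCount B₂.edges)
    (h : LastDetermined B₁ x) : LastDetermined B₂ x := by
  intro B₂' ha₂' hedges
  rw [ha₂] at ha₂'
  obtain ⟨t, ht⟩ : ∃ t, B₂'.getLast? = some t := by
    cases B₂' using reverseRecOn with
    | nil => simp at ha₂'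
    | append_singleton B t => exact ⟨t, by simp⟩
  rw [edges_append_singleton ht, edges_append_singleton hp₂] at hedges
  set E₁ := (B₁ ++ [x]).edges
  have hE₁ : E₁ = (p, x) ::ₘ B₁.edges := edges_append_singleton hp₁ x
  have hcapE : truncCount E₁ = truncCount ((p, x) ::ₘ B₂.edges) := by
    rw [hE₁]
    exact truncCount_cons_congr hcap _
  have htx : (t, x) ∈ E₁ :=
    (mem_congr_of_truncCount_eq hcapE _).2 (hedges ▸ Multiset.mem_cons_self _ _)
  set N := E₁.erase (t, x)
  have hN : (t, x) ::ₘ N = E₁ := Multiset.cons_erase htx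
  have hbal : t ::ₘ N.map Prod.fst = a ::ₘ N.map Prod.snd := by
    have h₁ : x ::ₘ E₁.map Prod.fst = a ::ₘ E₁.map Prod.snd :=
      (cons_map_fst_edges getLast?_concat).trans
        (cons_map_snd_edges (by simp [head?_append, ha₁])).symm
    rw [← hN, Multiset.map_cons, Multiset.map_cons, Multiset.cons_swap a] at h₁
    exact (Multiset.cons_inj_right x).1 h₁
  have hsupp : ∀ e, e ∈ B₂'.edges ↔ e ∈ N := fun e => by
    rw [← Multiset.erase_cons_head (t, x) B₂'.edges, hedges]
    exact (mem_erase_congr_of_truncCount_eq hcapE _ e).symm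
  have hreach : ∀ e ∈ N, ReflTransGen (fun u w => (u, w) ∈ N) a e.1 := fun e he =>
    ReflTransGen.mono (fun u w => (hsupp (u, w)).1) _ _
      (reflTransGen_of_mem ha₂' (mem_of_mem_edges ((hsupp e).2 he)).1)
  obtain ⟨B₁', ha₁', ht₁', hedges₁'⟩ := hasEulerTrail_of_balanced hbal hreach
  have := h B₁' (by rw [ha₁', ha₁]) (by rw [edges_append_singleton ht₁', hedges₁', hN])
  rw [ht, hp₂, ← hp₁, ← this, ht₁']

end Rigidity

section State

variable {β : Type*}

open List

lemma prefixDetermined_append_singleton {l : List β} (hl : l ≠ []) (x : β) :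
    PrefixDetermined (l ++ [x]) ↔ PrefixDetermined l ∧ LastDetermined l x := by
  refine ⟨fun h => ⟨fun B y A hB => h B y (A ++ [x]) (by simp [hB]), h l x [] rfl hl⟩, ?_⟩
  rintro ⟨hpre, hlast⟩ B y A hsplit hB
  rcases eq_nil_or_concat A with rfl | ⟨A, z, rfl⟩
  · obtain ⟨rfl, hxy⟩ := append_inj' hsplit rfl
    obtain rfl : x = y := by simpa using hxy
    exact hlast
  · rw [concat_eq_append, ← cons_append, ← append_assoc] at hsplit
    exact hpre B y A (append_inj' hsplit rfl).1 hB

variable [DecidableEq β]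

def prefixState (l : List β) : (β × β → Fin 3) × Option β × Prop :=
  (truncCount l.edges, l.getLast?, PrefixDetermined l)

lemma prefixState_append_singleton {l₁ l₂ : List β} {a : β} (ha₁ : l₁.head? = some a)
    (ha₂ : l₂.head? = some a) (h : prefixState l₁ = prefixState l₂) (x : β) :
    prefixState (l₁ ++ [x]) = prefixState (l₂ ++ [x]) := by
  simp only [prefixState, Prod.mk.injEq] at h ⊢
  obtain ⟨hcap, hlast, hpre⟩ := h
  have hne₁ : l₁ ≠ [] := by rintro rfl; simp at ha₁
  have hne₂ : l₂ ≠ [] := by rintro rfl; simp at ha₂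
  obtain ⟨p, hp₁⟩ := Option.ne_none_iff_exists'.1 (mt getLast?_eq_none_iff.1 hne₁)
  have hp₂ := hlast ▸ hp₁
  refine ⟨?_, by simp, ?_⟩
  · rw [edges_append_singleton hp₁, edges_append_singleton hp₂]
    exact truncCount_cons_congr hcap _
  · rw [prefixDetermined_append_singleton hne₁, prefixDetermined_append_singleton hne₂, hpre]
    exact congrArg _ (propext ⟨LastDetermined.of_truncCount_eq ha₁ ha₂ hp₁ hp₂ hcap,
      LastDetermined.of_truncCount_eq ha₂ ha₁ hp₂ hp₁ hcap.symm⟩)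

end State

section Decoding

open List

lemma List.exists_eq_map_some {m : List (Option α)} (h : none ∉ m) :
    ∃ v : List α, m = v.map some := by
  induction m with
  | nil => exact ⟨[], rfl⟩
  | cons o m ih =>
    obtain ⟨a, rfl⟩ := Option.ne_none_iff_exists'.1 fun h' => h (h' ▸ mem_cons_self)
    obtain ⟨v, rfl⟩ := ih fun h' => h (mem_cons_of_mem _ h')
    exact ⟨a :: v, rfl⟩

lemma List.exists_getLast?_ne_of_ne {l₁ l₂ : List α} (h : l₁ ≠ l₂) :
    ∃ B₁ B₂ A, l₁ = B₁ ++ A ∧ l₂ = B₂ ++ A ∧ B₁.getLast? ≠ B₂.getLast? := by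
  induction l₁ using reverseRecOn generalizing l₂ with
  | nil => exact ⟨[], l₂, [], rfl, by simp, by simpa [eq_comm] using h⟩
  | append_singleton m₁ z₁ ih =>
    cases l₂ using reverseRecOn with
    | nil => exact ⟨m₁ ++ [z₁], [], [], by simp, rfl, by simp⟩
    | append_singleton m₂ z₂ =>
      by_cases hz : z₁ = z₂
      · subst hz
        obtain ⟨B₁, B₂, A, rfl, rfl, hne⟩ := ih fun hm => h (by rw [hm])
        exact ⟨B₁, B₂, A ++ [z₁], by simp, by simp, hne⟩
      · exact ⟨m₁ ++ [z₁], m₂ ++ [z₂], [], by simp, by simp, by simpa using hz⟩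

lemma delim_eq_append (w : List α) : delim w = (none :: w.map some) ++ [none] := by
  simp [delim]

lemma delim_injective : Function.Injective (delim : List α → List (Option α)) := by
  intro v w h
  simp only [delim, cons.injEq, true_and, append_cancel_right_eq] at h
  exact map_injective_iff.2 (Option.some_injective α) h

lemma head?_delim (w : List α) : (delim w).head? = some none := rfl

lemma getLast?_delim (w : List α) : (delim w).getLast? = some none := by
  rw [delim_eq_append, getLast?_concat]

lemma exists_delim_eq_of_perm {l : List (Option α)} {w : List α} (h₁ : l.head? = some none)
    (h₂ : l.getLast? = some none) (hp : l ~ delim w) : ∃ v, delim v = l := by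
  obtain ⟨m, rfl⟩ := head?_eq_some_iff.1 h₁
  rcases eq_nil_or_concat m with rfl | ⟨m, z, rfl⟩
  · simpa [delim] using hp.length_eq
  obtain rfl : z = none := by
    rw [concat_eq_append, getLast?_cons_of_ne_nil (by simp), getLast?_concat] at h₂
    exact Option.some_inj.1 h₂
  have hm : m ~ w.map some := by simpa [delim, perm_append_right_iff] using hp
  obtain ⟨v, rfl⟩ := exists_eq_map_some fun h => by simpa using hm.subset h
  exact ⟨v, by simp [delim]⟩

theorem UniqDec.prefixDetermined {w : List α} (hU : UniqDec w) :
    PrefixDetermined (delim w) := by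
  intro B x A hsplit hB B' hhead hedges
  have hB' : B' ≠ [] := fun h => hB (head?_eq_none_iff.1 (h ▸ hhead).symm)
  have hhead' : (B' ++ x :: A).head? = some none := by
    rw [head?_append_of_ne_nil _ hB', hhead, ← head?_append_of_ne_nil _ hB, ← hsplit,
      head?_delim]
  have hlast' : (B' ++ x :: A).getLast? = some none := by
    rw [getLast?_append_of_ne_nil _ (cons_ne_nil _ _),
      ← getLast?_append_of_ne_nil B (cons_ne_nil _ _), ← hsplit, getLast?_delim]
  have hedges' : (B' ++ x :: A).edges = (delim w).edges := by
    rw [hsplit, edges_append_cons, hedges, ← edges_append_cons]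
  obtain ⟨v, hv⟩ := exists_delim_eq_of_perm hhead' hlast'
    (Multiset.coe_eq_coe.1 (coe_eq_of_edges_eq hhead' (head?_delim w) hedges'))
  obtain rfl := hU v (show (delim v).edges = (delim w).edges by rw [hv, hedges'])
  rw [append_cancel_right (hv.symm.trans hsplit)]

theorem uniqDec_of_prefixDetermined {w : List α} (hP : PrefixDetermined (delim w)) :
    UniqDec w := by
  intro v hvw
  by_contra hne
  obtain ⟨B₁, B₂, A, e₁, e₂, hlast⟩ := exists_getLast?_ne_of_ne (delim_injective.ne hne)
  rcases A with _ | ⟨x, A⟩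
  · simp only [append_nil] at e₁ e₂
    exact hlast (by rw [← e₁, ← e₂, getLast?_delim, getLast?_delim])
  have hedges : (B₁ ++ [x]).edges = (B₂ ++ [x]).edges := by
    have : (delim v).edges = (delim w).edges := hvw
    rw [e₁, e₂, edges_append_cons B₁ x A, edges_append_cons B₂ x A] at this
    exact add_right_cancel this
  have hlen : B₁.length = B₂.length := by
    simpa [card_edges] using congrArg Multiset.card hedges
  have hB₂ : B₂ ≠ [] := by
    rintro rfl
    rw [length_eq_zero_iff.1 hlen] at hlast
    exact hlast rfl
  have hB₁ : B₁ ≠ [] := fun h => hB₂ (length_eq_zero_iff.1 (hlen ▸ h ▸ rfl))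
  have hhead : B₁.head? = B₂.head? := by
    have h₁ := head?_delim v
    have h₂ := head?_delim w
    rw [e₁, head?_append_of_ne_nil _ hB₁] at h₁
    rw [e₂, head?_append_of_ne_nil _ hB₂] at h₂
    rw [h₁, h₂]
  exact hlast (hP B₂ x A e₂ hB₂ B₁ hhead hedges)

theorem uniqDec_iff_prefixDetermined (w : List α) :
    UniqDec w ↔ PrefixDetermined (delim w) :=
  ⟨UniqDec.prefixDetermined, uniqDec_of_prefixDetermined⟩

end Decoding

theorem Language.isRegular_of_rightCongr {S : Type*} [Finite S] {L : Language α}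
    (f : List α → S) (hstep : ∀ w w' a, f w = f w' → f (w ++ [a]) = f (w' ++ [a]))
    (hmem : ∀ w w', f w = f w' → (w ∈ L ↔ w' ∈ L)) : L.IsRegular := by
  have happend : ∀ u w w', f w = f w' → f (w ++ u) = f (w' ++ u) := by
    intro u
    induction u with
    | nil => simp
    | cons a u ih => exact fun w w' h => by simpa using ih _ _ (hstep w w' a h)
  refine .of_finite_range_leftQuotient
    ((Set.finite_range fun s => L.leftQuotient (Function.invFun f s)).subset ?_)
  rintro _ ⟨w, rfl⟩
  exact ⟨f w, Set.ext fun u => hmem _ _ (happend u _ _ (Function.invFun_eq ⟨w, rfl⟩))⟩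

/-- The language of uniquely decodable strings over a finite alphabet is regular. -/
theorem stmt7 (α : Type) [Fintype α] :
    Language.IsRegular {w : List α | UniqDec w} := by
  classical
  refine Language.isRegular_of_rightCongr (fun w : List α => prefixState (none :: w.map some))
    (fun w w' a h => ?_) (fun w w' h => ?_)
  · simpa using prefixState_append_singleton rfl rfl h (some a)
  · have := congrArg (fun s => s.2.2) (prefixState_append_singleton rfl rfl h none)
    simp only [uniqDec_iff_prefixDetermined, delim_eq_append]
    exact Iff.of_eq this
end

section
/- Let G be a directed graph with a node g having distinct out-neighbors x, y such that there are directed paths x ⇒ g and y ⇒ g. Then at least one of the following holds: there is a path from x to g avoiding y, or there is a path from y to g avoiding x. -/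
/-! Cutting a walk `x ⇒ g` after the last occurrence of `y` gives a walk `y ⇒ g` avoiding `y`;
if it still meets `x`, cutting that walk after the last occurrence of `x` gives a walk `x ⇒ g`
avoiding both. -/

variable {α : Type*}

/-- A directed walk in the graph `G` from `a` to `b` with list `l` of intermediate
vertices. -/
def Walk (G : α → α → Prop) (a b : α) (l : List α) : Prop :=
  List.Chain G a (l ++ [b])

theorem Walk.exists_suffix_of_mem {G : α → α → Prop} {a b v : α} {l : List α}
    (h : Walk G a b l) (hv : v ∈ l) : ∃ l', Walk G v b l' ∧ v ∉ l' ∧ l' <:+ l := by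
  induction l generalizing a with
  | nil => simp at hv
  | cons c t ih =>
    have htail : Walk G c b t := (List.isChain_cons_cons.mp h).2
    by_cases hvt : v ∈ t
    · obtain ⟨l', hw, hvl', hsuf⟩ := ih htail hvt
      exact ⟨l', hw, hvl', hsuf.trans (List.suffix_cons c t)⟩
    · obtain rfl : v = c := (List.mem_cons.mp hv).resolve_right hvt
      exact ⟨t, htail, hvt, List.suffix_cons v t⟩

theorem stmt9_general (G : α → α → Prop) (g x y : α) (hx : ∃ l, Walk G x g l) :
    (∃ l, Walk G x g l ∧ y ∉ l) ∨ (∃ l, Walk G y g l ∧ x ∉ l) := by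
  obtain ⟨l, hl⟩ := hx
  by_cases hyl : y ∈ l
  · obtain ⟨l', hl', hyl', -⟩ := hl.exists_suffix_of_mem hyl
    by_cases hxl' : x ∈ l'
    · obtain ⟨l'', hl'', -, hsuf⟩ := hl'.exists_suffix_of_mem hxl'
      exact Or.inl ⟨l'', hl'', fun hyl'' => hyl' (hsuf.subset hyl'')⟩
    · exact Or.inr ⟨l', hl', hxl'⟩
  · exact Or.inl ⟨l, hl, hyl⟩

/-- If `g` has distinct out-neighbors `x, y` with paths `x ⇒ g` and `y ⇒ g`, then
there is a path `x ⇒ g` avoiding `y` or a path `y ⇒ g` avoiding `x`. -/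
theorem stmt9 (G : α → α → Prop) (g x y : α) (hgx : G g x) (hgy : G g y)
    (hxy : x ≠ y) (hx : ∃ l, Walk G x g l) (hy : ∃ l, Walk G y g l) :
    (∃ l, Walk G x g l ∧ y ∉ l) ∨ (∃ l, Walk G y g l ∧ x ∉ l) :=
  stmt9_general G g x y hx
end

section
/- Let w ∈ Σ* be a strictly increasing string over an ordered alphabet, and let x ∈ Σ be a letter not equal to the last letter of w. Then w·x·x ∈ L_UNIQ if and only if x does not occur in w. -/
variable {α : Type*}

/-!
If `x = w_i` with `i` not the last index, then `w x x` and the string obtained by moving the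
final `x` next to `w_i` have the same bigrams, since both arise from `w x` by inserting one
extra `x` beside an existing one; as `w_i < w_{i+1}`, the two strings differ.

If `x ∉ w`, each letter of `$w` is the first letter of exactly one bigram of `$wxx$`, so any
`$v$` with the same bigrams must follow `$w` letter by letter; the remaining bigrams
`(w_n, x), (x, x), (x, $)` then leave no choice either.
-/

section AdjacentPairs

variable {β : Type*}

def adjacentPairs (l : List β) : List (β × β) := l.zip l.tail

@[simp] lemma adjacentPairs_singleton (a : β) : adjacentPairs [a] = [] := rfl

@[simp] lemma adjacentPairs_cons_cons (a b : β) (l : List β) :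
    adjacentPairs (a :: b :: l) = (a, b) :: adjacentPairs (b :: l) := rfl

lemma adjacentPairs_append_cons (l : List β) (a : β) (m : List β) :
    adjacentPairs (l ++ a :: m) = adjacentPairs (l ++ [a]) ++ adjacentPairs (a :: m) := by
  induction l with
  | nil => simp
  | cons c l ih =>
    cases l with
    | nil => simp
    | cons d l => simpa using ih

lemma fst_mem_dropLast_of_mem_adjacentPairs :
    ∀ {l : List β} {p : β × β}, p ∈ adjacentPairs l → p.1 ∈ l.dropLast
  | a :: b :: l, p, h => by
    rcases List.mem_cons.mp h with rfl | h
    · simp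
    · exact List.mem_cons_of_mem a (fst_mem_dropLast_of_mem_adjacentPairs h)

lemma adjacentPairs_duplicate_perm (l : List β) (x : β) (m : List β) :
    (adjacentPairs (l ++ x :: x :: m)).Perm ((x, x) :: adjacentPairs (l ++ x :: m)) := by
  rw [adjacentPairs_append_cons l x (x :: m), adjacentPairs_cons_cons,
    adjacentPairs_append_cons l x m]
  exact List.perm_middle

lemma exists_eq_cons_of_adjacentPairs_perm {c d : β} {r s : List β} (hc : c ∉ (d :: r).dropLast)
    (h : (adjacentPairs (c :: s)).Perm (adjacentPairs (c :: d :: r))) :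
    ∃ s', s = d :: s' ∧ (adjacentPairs (d :: s')).Perm (adjacentPairs (d :: r)) := by
  obtain _ | ⟨e, s'⟩ := s
  · simpa using h.length_eq
  have hce : (c, e) ∈ (c, d) :: adjacentPairs (d :: r) := by
    rw [← adjacentPairs_cons_cons, ← h.mem_iff]; simp
  rcases List.mem_cons.mp hce with hed | hmem
  · obtain rfl : e = d := (Prod.mk.inj hed).2
    exact ⟨s', rfl, h.cons_inv⟩
  · exact absurd (fst_mem_dropLast_of_mem_adjacentPairs hmem) hc

lemma eq_append_of_adjacentPairs_perm {t : List β}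
    (ht : ∀ c s, c ∉ t.dropLast →
      (adjacentPairs (c :: s)).Perm (adjacentPairs (c :: t)) → s = t) :
    ∀ {p : List β} {c : β} {s : List β}, (c :: p).Nodup →
      (∀ y ∈ c :: p, y ∉ t.dropLast) →
      (adjacentPairs (c :: s)).Perm (adjacentPairs (c :: (p ++ t))) → s = p ++ t
  | [], c, s, _, hdisj, h => ht c s (hdisj c (by simp)) h
  | d :: p, c, s, hnodup, hdisj, h => by
    have hc : c ∉ (d :: (p ++ t)).dropLast := by
      intro hmem
      rw [← List.cons_append, List.dropLast_append] at hmem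
      split_ifs at hmem
      · exact (List.nodup_cons.mp hnodup).1 (List.dropLast_subset _ hmem)
      · rcases List.mem_append.mp hmem with hmem | hmem
        · exact (List.nodup_cons.mp hnodup).1 hmem
        · exact hdisj c (by simp) hmem
    obtain ⟨s', rfl, h'⟩ := exists_eq_cons_of_adjacentPairs_perm hc h
    rw [eq_append_of_adjacentPairs_perm ht (List.nodup_cons.mp hnodup).2
      (fun y hy => hdisj y (List.mem_cons_of_mem c hy)) h']
    rfl

lemma eq_of_adjacentPairs_perm_double {c x z : β} {s : List β} (hcx : c ≠ x)
    (h : (adjacentPairs (c :: s)).Perm (adjacentPairs [c, x, x, z])) : s = [x, x, z] := by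
  obtain ⟨s, rfl, h'⟩ := exists_eq_cons_of_adjacentPairs_perm (by simpa using hcx) h
  obtain _ | ⟨b, _ | ⟨e, _ | ⟨_, _⟩⟩⟩ := s <;> try simpa using h'.length_eq
  have hb : (b = x ∧ e = x) ∨ (b = x ∧ e = z) := by
    simpa using h'.mem_iff.mp (by simp : (b, e) ∈ adjacentPairs [x, b, e])
  obtain rfl : b = x := hb.elim And.left And.left
  simp only [adjacentPairs_cons_cons, adjacentPairs_singleton] at h'
  obtain rfl : e = z := by simpa using h'.cons_inv
  rfl

end AdjacentPairs

lemma bigrams_eq_coe_adjacentPairs (w : List α) :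
    bigrams w = (adjacentPairs (delim w) : Multiset (Option α × Option α)) := rfl

lemma bigrams_move_duplicate (a b : List α) (x : α) :
    bigrams (a ++ x :: x :: b ++ [x]) = bigrams (a ++ x :: b ++ [x, x]) := by
  simp only [bigrams_eq_coe_adjacentPairs, Multiset.coe_eq_coe]
  have hl :=
    adjacentPairs_duplicate_perm (none :: a.map some) (some x) (b.map some ++ [some x, none])
  have hr := adjacentPairs_duplicate_perm (none :: (a ++ x :: b).map some) (some x) [none]
  simp only [delim, List.map_append, List.map_cons, List.cons_append, List.append_assoc]
    at hl hr ⊢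
  exact hl.trans hr.symm

lemma not_uniqDec_of_ne (a b : List α) (x y : α) (hxy : x ≠ y) :
    ¬ UniqDec (a ++ x :: y :: b ++ [x, x]) := by
  intro huniq
  have heq := huniq _ (bigrams_move_duplicate a (y :: b) x)
  simp only [List.append_assoc, List.cons_append, List.append_cancel_left_eq,
    List.cons.injEq] at heq
  exact hxy heq.2.1

lemma uniqDec_append_double [LinearOrder α] {w : List α} (hw : w.IsChain (· < ·)) {x : α}
    (hx : x ∉ w) : UniqDec (w ++ [x, x]) := by
  intro v hv
  rw [bigrams_eq_coe_adjacentPairs, bigrams_eq_coe_adjacentPairs, Multiset.coe_eq_coe] at hv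
  have hnodup : (none :: w.map some).Nodup :=
    List.nodup_cons.mpr
      ⟨by simp, (List.isChain_iff_pairwise.mp hw).nodup.map (Option.some_injective _)⟩
  have hdisj : ∀ y ∈ none :: w.map some, y ∉ [some x, some x, none].dropLast := by
    simp only [List.mem_cons, List.mem_map]
    rintro y (rfl | ⟨a, ha, rfl⟩) <;> simp only [List.dropLast]
    · simp
    · simpa using ne_of_mem_of_not_mem ha hx
  have hfinal : ∀ c s, c ∉ [some x, some x, none].dropLast →
      (adjacentPairs (c :: s)).Perm (adjacentPairs [c, some x, some x, none]) →
      s = [some x, some x, none] :=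
    fun c s hc => eq_of_adjacentPairs_perm_double (by simpa using hc)
  have hv' := eq_append_of_adjacentPairs_perm hfinal hnodup hdisj (by simpa [delim] using hv)
  rw [show [some x, some x, none] = [x, x].map some ++ [none] from rfl, ← List.append_assoc,
    ← List.map_append] at hv'
  exact List.map_injective_iff.mpr (Option.some_injective _) (List.append_cancel_right hv')

/-- For a strictly increasing `w` and a letter `x` not equal to the last letter of
`w`: `w·x·x ∈ L_UNIQ` iff `x` does not occur in `w`. -/
theorem stmt13 {α : Type*} [LinearOrder α] (w : List α) (hw : w.Chain' (· < ·))
    (x : α) (hx : w.getLast? ≠ some x) :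
    UniqDec (w ++ [x, x]) ↔ x ∉ w := by
  refine ⟨fun huniq hmem => ?_, uniqDec_append_double hw⟩
  obtain ⟨a, _ | ⟨y, b⟩, rfl⟩ := List.append_of_mem hmem
  · exact hx (by simp)
  have hxy : x < y := (List.isChain_cons_cons.mp (hw.suffix ⟨a, rfl⟩)).1
  exact not_uniqDec_of_ne a b x y hxy.ne (by simpa using huniq)
end
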